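/- Let m and n be positive integers with n ≥ 1. Then |R(n,m)| = Σ_{1 ≤ k ≤ n, gcd(k,m)=1} (n−1)(n−2)⋯(n−k+1)·|R(n−k,m)|, where the summand for k is (n−1)!/(n−k)! times |R(n−k,m)|. -/

import Mathlib

/-!
Sort the permutations `π` of `Fin n` by the length `k` of the cycle through `0`. Such a `π` is the
product of that cycle `c` (determined by the injective sequence `π 0, …, π^(k-1) 0` of points
other than `0`, for which there are `(n-1)!/(n-k)!` choices) and a disjoint permutation `σ` of the
remaining `n - k` points, chosen freely. As `orderOf π = lcm k (orderOf σ)`, the order of `π` is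
coprime to `m` exactly when both `k` and `orderOf σ` are.
-/

/-- `Rcard n m` is the number of permutations in `Sym(n)` whose order is coprime to `m`.
Note that `Rcard 0 m = 1`. -/
noncomputable def Rcard (n m : ℕ) : ℕ :=
  (Finset.univ.filter (fun π : Equiv.Perm (Fin n) => Nat.Coprime (orderOf π) m)).card

open Equiv Equiv.Perm Finset Function

theorem Nat.coprime_lcm_left_iff {a b m : ℕ} :
    (Nat.lcm a b).Coprime m ↔ a.Coprime m ∧ b.Coprime m :=
  ⟨fun h => ⟨h.coprime_dvd_left (Nat.dvd_lcm_left a b),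
      h.coprime_dvd_left (Nat.dvd_lcm_right a b)⟩,
    fun h => (Nat.coprime_mul_iff_left.2 h).coprime_dvd_left (Nat.lcm_dvd_mul a b)⟩

theorem minimalPeriod_dvd_orderOf {α : Type*} (π : Perm α) (a : α) :
    minimalPeriod π a ∣ orderOf π :=
  IsPeriodicPt.minimalPeriod_dvd <| by
    rw [IsPeriodicPt, IsFixedPt, iterate_eq_pow, pow_orderOf_eq_one, one_apply]

theorem minimalPeriod_eq_length_of_iterate {α : Type*} {f : α → α} {a : α} {t : List α}
    (hl : (a :: t).Nodup)
    (h : ∀ i, f^[i] a = (a :: t)[i % (t.length + 1)]'(Nat.mod_lt _ t.length.succ_pos)) :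
    minimalPeriod f a = t.length + 1 := by
  have hper : IsPeriodicPt f (t.length + 1) a := by
    rw [IsPeriodicPt, IsFixedPt, h]
    simp
  refine (Nat.le_of_dvd t.length.succ_pos hper.minimalPeriod_dvd).eq_or_lt.resolve_right
    fun hlt => (hper.minimalPeriod_pos t.length.succ_pos).ne' ?_
  have hback := h (minimalPeriod f a)
  simp only [iterate_minimalPeriod, Nat.mod_eq_of_lt hlt] at hback
  exact ((hl.getElem_inj_iff (i := 0) (hi := t.length.succ_pos)).1 hback).symm

section FormPerm

variable {α : Type*} [DecidableEq α]

theorem List.orderOf_formPerm_dvd_length {l : List α} (hl : l.Nodup) :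
    orderOf l.formPerm ∣ l.length :=
  orderOf_dvd_of_pow_eq_one (l.formPerm_pow_length_eq_one_of_nodup hl)

theorem eqOn_formPerm_cons_iff_iterate {π : Perm α} {a : α} {t : List α} (hl : (a :: t).Nodup) :
    (∀ x ∈ a :: t, π x = (a :: t).formPerm x) ↔
      ∀ i, π^[i] a = (a :: t)[i % (t.length + 1)]'(Nat.mod_lt _ t.length.succ_pos) := by
  constructor
  · intro h i
    induction i with
    | zero => simp
    | succ i ih =>
      rw [iterate_succ_apply', ih, h _ (List.getElem_mem _), List.formPerm_apply_getElem _ hl]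
      simp only [List.length_cons, Nat.mod_add_mod]
  · intro h x hx
    obtain ⟨j, hj, rfl⟩ := List.getElem_of_mem hx
    have hjmod : j % (t.length + 1) = j := Nat.mod_eq_of_lt hj
    have hπj : π^[j] a = (a :: t)[j] := by simpa only [hjmod] using h j
    rw [List.formPerm_apply_getElem _ hl, ← hπj, ← iterate_succ_apply' π, h]
    rfl

end FormPerm

section CycleList

variable {α : Type*} {a : α} {k : ℕ}

/-- `cycleList a e = [a, e 0, …, e (k - 1)]`; such an embedding lists the cycle of length `k + 1`
through `a` of a permutation, starting from `a`. -/
def cycleList (a : α) {k : ℕ} (e : Fin k ↪ {x // x ≠ a}) : List α :=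
  a :: List.ofFn fun i => (e i : α)

@[simp]
theorem length_cycleList (e : Fin k ↪ {x // x ≠ a}) : (cycleList a e).length = k + 1 := by
  simp [cycleList]

theorem cycleList_nodup (e : Fin k ↪ {x // x ≠ a}) : (cycleList a e).Nodup :=
  List.nodup_cons.2 ⟨by simpa using fun i => (e i).2,
    List.nodup_ofFn.2 (Subtype.val_injective.comp e.injective)⟩

theorem cycleList_injective : Injective (cycleList a (k := k)) := fun e e' h => by
  have h' := List.ofFn_injective (List.cons_injective h)
  exact DFunLike.ext _ _ fun i => Subtype.ext (congrFun h' i)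

variable [DecidableEq α]

theorem exists_eqOn_formPerm_cycleList {π : Perm α} (h : minimalPeriod π a = k + 1) :
    ∃ e : Fin k ↪ {x // x ≠ a}, ∀ x ∈ cycleList a e, π x = (cycleList a e).formPerm x := by
  have hinj : ∀ i j, i < k + 1 → j < k + 1 → π^[i] a = π^[j] a → i = j :=
    fun i j hi hj hij =>
      iterate_injOn_Iio_minimalPeriod (by rwa [Set.mem_Iio, h]) (by rwa [Set.mem_Iio, h]) hij
  let e : Fin k ↪ {x // x ≠ a} :=
    ⟨fun i => ⟨π^[i + 1] a, fun hi => by cases hinj _ 0 (by omega) (by omega) hi⟩,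
      fun i j hij => Fin.ext <| by
        simpa using hinj _ _ (by omega) (by omega) (congrArg Subtype.val hij)⟩
  have horbit : ∀ j (hj : j < k + 1),
      π^[j] a = (cycleList a e)[j]'(by rwa [length_cycleList]) := by
    rintro (_ | j) hj
    · rfl
    · simp [cycleList, e]
  refine ⟨e, (eqOn_formPerm_cons_iff_iterate (cycleList_nodup e)).2 fun i => ?_⟩
  rw [← iterate_mod_minimalPeriod_eq, h]
  simp only [List.length_ofFn]
  exact horbit _ (Nat.mod_lt i k.succ_pos)

theorem eq_of_eqOn_formPerm_cycleList {π : Perm α} {e e' : Fin k ↪ {x // x ≠ a}}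
    (h : ∀ x ∈ cycleList a e, π x = (cycleList a e).formPerm x)
    (h' : ∀ x ∈ cycleList a e', π x = (cycleList a e').formPerm x) : e = e' := by
  have hit := (eqOn_formPerm_cons_iff_iterate (cycleList_nodup e)).1 h
  have hit' := (eqOn_formPerm_cons_iff_iterate (cycleList_nodup e')).1 h'
  refine cycleList_injective (List.ext_getElem (by simp) fun i hi _ => ?_)
  have hik : i % (k + 1) = i := Nat.mod_eq_of_lt (by simpa using hi)
  simpa [hik, cycleList] using (hit i).symm.trans (hit' i)

end CycleList

section Counting

variable {α : Type*} [Fintype α] [DecidableEq α]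

theorem card_filter_coprime_orderOf_eq_Rcard {N : ℕ} (m : ℕ) (h : Fintype.card α = N) :
    #{π : Perm α | (orderOf π).Coprime m} = Rcard N m := by
  let e := (Fintype.equivFinOfCardEq h).permCongrHom
  refine card_equiv e.toEquiv fun π => ?_
  simp only [mem_filter, mem_univ, true_and]
  exact (congrArg (Nat.Coprime · m) (e.orderOf_eq π)).to_iff.symm

theorem orderOf_mul_ofSubtype {c : Perm α} {s : Finset α} (hc : c.support ⊆ s)
    (σ : Perm {x // x ∉ s}) : orderOf (c * ofSubtype σ) = Nat.lcm (orderOf c) (orderOf σ) := by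
  have hdisj : c.Disjoint (ofSubtype σ) := fun x => by
    by_cases hx : x ∈ s
    · exact Or.inr (ofSubtype_apply_of_not_mem σ (not_not.2 hx))
    · exact Or.inl (notMem_support.1 fun h => hx (hc h))
  rw [hdisj.orderOf, orderOf_injective ofSubtype ofSubtype_injective σ]

theorem card_filter_eqOn_coprime_orderOf {c : Perm α} {s : Finset α} (hc : c.support ⊆ s)
    {m : ℕ} (hcm : (orderOf c).Coprime m) :
    #{π : Perm α | (∀ x ∈ s, π x = c x) ∧ (orderOf π).Coprime m} =
      #{σ : Perm {x // x ∉ s} | (orderOf σ).Coprime m} := by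
  refine (card_bij (fun σ _ => c * ofSubtype σ) ?_ ?_ ?_).symm
  · intro σ hσ
    simp only [mem_filter, mem_univ, true_and] at hσ ⊢
    refine ⟨fun x hx => ?_, ?_⟩
    · rw [mul_apply, ofSubtype_apply_of_not_mem σ (not_not.2 hx)]
    · rw [orderOf_mul_ofSubtype hc, Nat.coprime_lcm_left_iff]
      exact ⟨hcm, hσ⟩
  · intro σ _ τ _ h
    exact ofSubtype_injective (mul_left_cancel h)
  · intro π hπ
    simp only [mem_filter, mem_univ, true_and] at hπ
    obtain ⟨hagree, hcop⟩ := hπ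
    obtain ⟨σ, hσ⟩ := (Perm.subtypeEquivSubtypePerm (· ∉ s)).surjective
      ⟨c⁻¹ * π, fun x hx => by simp [hagree x (not_not.1 hx)]⟩
    have hπ : c * ofSubtype σ = π := by
      rw [← Perm.subtypeEquivSubtypePerm_apply_coe, hσ, mul_inv_cancel_left]
    refine ⟨σ, ?_, hπ⟩
    rw [← hπ, orderOf_mul_ofSubtype hc, Nat.coprime_lcm_left_iff] at hcop
    simpa using hcop.2

theorem card_filter_eqOn_formPerm_cycleList {a : α} {k m : ℕ} (hkm : (k + 1).Coprime m)
    (e : Fin k ↪ {x // x ≠ a}) :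
    #{π : Perm α | (∀ x ∈ (cycleList a e).toFinset, π x = (cycleList a e).formPerm x) ∧
      (orderOf π).Coprime m} = Rcard (Fintype.card α - (k + 1)) m := by
  have hl := cycleList_nodup e
  rw [card_filter_eqOn_coprime_orderOf (List.support_formPerm_le _)
    (hkm.coprime_dvd_left (length_cycleList e ▸ List.orderOf_formPerm_dvd_length hl))]
  refine card_filter_coprime_orderOf_eq_Rcard m ?_
  rw [Fintype.card_subtype_compl, Fintype.card_coe, List.toFinset_card_of_nodup hl,
    length_cycleList]

theorem filter_coprime_minimalPeriod_eq_biUnion (a : α) (k m : ℕ) :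
    ({π : Perm α | (orderOf π).Coprime m ∧ minimalPeriod π a = k + 1} : Finset _) =
      (univ : Finset (Fin k ↪ {x // x ≠ a})).biUnion fun e =>
        {π : Perm α | (∀ x ∈ (cycleList a e).toFinset, π x = (cycleList a e).formPerm x) ∧
          (orderOf π).Coprime m} := by
  ext π
  simp only [mem_filter, mem_univ, true_and, mem_biUnion, List.mem_toFinset]
  constructor
  · rintro ⟨hcop, hper⟩
    obtain ⟨e, he⟩ := exists_eqOn_formPerm_cycleList hper
    exact ⟨e, he, hcop⟩
  · rintro ⟨e, he, hcop⟩
    have hl := cycleList_nodup e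
    refine ⟨hcop, ?_⟩
    simpa using minimalPeriod_eq_length_of_iterate hl
      ((eqOn_formPerm_cons_iff_iterate hl).1 he)

theorem card_filter_coprime_minimalPeriod_eq (a : α) {k m : ℕ} (hkm : (k + 1).Coprime m) :
    #{π : Perm α | (orderOf π).Coprime m ∧ minimalPeriod π a = k + 1} =
      (Fintype.card α - 1).descFactorial k * Rcard (Fintype.card α - (k + 1)) m := by
  have hdisj : (Set.univ : Set (Fin k ↪ {x // x ≠ a})).PairwiseDisjoint fun e =>
      ({π : Perm α | (∀ x ∈ (cycleList a e).toFinset, π x = (cycleList a e).formPerm x) ∧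
        (orderOf π).Coprime m} : Finset _) := by
    intro e _ e' _ hne
    simp only [onFun, disjoint_filter, List.mem_toFinset]
    exact fun π _ he he' => hne (eq_of_eqOn_formPerm_cycleList he.1 he'.1)
  rw [filter_coprime_minimalPeriod_eq_biUnion, card_biUnion (by simpa using hdisj),
    sum_congr rfl fun e _ => card_filter_eqOn_formPerm_cycleList hkm e, sum_const, card_univ,
    Fintype.card_embedding_eq, Fintype.card_fin, smul_eq_mul]
  simp only [ne_eq, Fintype.card_subtype_compl, Fintype.card_unique]

end Counting

theorem stmt_5_general (n m : ℕ) (hn : 1 ≤ n) :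
    Rcard n m =
      ∑ k ∈ (Finset.Icc 1 n).filter (fun k => Nat.Coprime k m),
        Nat.factorial (n - 1) / Nat.factorial (n - k) * Rcard (n - k) m := by
  let a : Fin n := ⟨0, hn⟩
  have hperiod : ∀ π ∈ (univ.filter fun π : Perm (Fin n) => (orderOf π).Coprime m),
      minimalPeriod π a ∈ (Icc 1 n).filter (·.Coprime m) := by
    intro π hπ
    have hdvd := minimalPeriod_dvd_orderOf π a
    simp only [mem_filter, mem_univ, true_and, mem_Icc] at hπ ⊢
    refine ⟨⟨Nat.pos_of_dvd_of_pos hdvd (orderOf_pos π), ?_⟩, hπ.coprime_dvd_left hdvd⟩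
    simpa using minimalPeriod_le_card (f := π) (x := a)
  rw [Rcard, card_eq_sum_card_fiberwise hperiod]
  refine sum_congr rfl fun k hk => ?_
  obtain ⟨⟨hk1, hkn⟩, hkm⟩ := by simpa only [mem_filter, mem_Icc] using hk
  obtain ⟨j, rfl⟩ := Nat.exists_eq_add_of_le' hk1
  rw [filter_filter, card_filter_coprime_minimalPeriod_eq a hkm, Fintype.card_fin,
    Nat.descFactorial_eq_div (by omega), show n - 1 - j = n - (j + 1) by omega]

theorem stmt_5 (n m : ℕ) (hm : 0 < m) (hn : 1 ≤ n) :
    Rcard n m =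
      ∑ k ∈ (Finset.Icc 1 n).filter (fun k => Nat.Coprime k m),
        Nat.factorial (n - 1) / Nat.factorial (n - k) * Rcard (n - k) m :=
  stmt_5_general n m hn
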